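/- Let θ ∈ C²((0,ε)) satisfy (∂_t θ)² + ∂_t² θ ≥ 3/(4t²) − κ/t for all t ∈ (0,ε), where κ ≥ 0. Then for every u ∈ C_c^∞((0,ε)), ∫₀^ε |∂_t u(t)|² e^{2θ(t)} dt ≥ ∫₀^ε (1/t² − κ/t) |u(t)|² e^{2θ(t)} dt. -/

import Mathlib

open MeasureTheory Set

/-- 1D weak Hardy inequality with effective potential lower bound: if
`(θ')² + θ'' ≥ 3/(4t²) − κ/t` on `(0,ε)` with `κ ≥ 0`, then for all
`u ∈ C_c^∞((0,ε); ℂ)`,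
`∫₀^ε |u'|² e^{2θ} dt ≥ ∫₀^ε (1/t² − κ/t) |u|² e^{2θ} dt`. -/
theorem weak_hardy_1D (ε κ : ℝ) (hε : 0 < ε) (hκ : 0 ≤ κ)
    (θ θ' θ'' : ℝ → ℝ)
    (hθ' : ∀ t ∈ Set.Ioo 0 ε, HasDerivAt θ (θ' t) t)
    (hθ'' : ∀ t ∈ Set.Ioo 0 ε, HasDerivAt θ' (θ'' t) t)
    (hθ''cont : ContinuousOn θ'' (Set.Ioo 0 ε))
    (hVeff : ∀ t ∈ Set.Ioo 0 ε, 3 / (4 * t ^ 2) - κ / t ≤ (θ' t) ^ 2 + θ'' t)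
    (u : ℝ → ℂ) (hu : ContDiff ℝ (⊤ : ℕ∞) u)
    (hsupp : tsupport u ⊆ Set.Ioo 0 ε) (hcomp : HasCompactSupport u) :
    ∫ t in Set.Ioo 0 ε, (1 / t ^ 2 - κ / t) * ‖u t‖ ^ 2 * Real.exp (2 * θ t)
      ≤ ∫ t in Set.Ioo 0 ε, ‖deriv u t‖ ^ 2 * Real.exp (2 * θ t) := by
  classical
  by_cases hKe : (tsupport u).Nonempty
  swap
  · -- u is identically zero
    have hK0 : tsupport u = ∅ := not_nonempty_iff_eq_empty.mp hKe
    have h1 : ∀ t, u t = 0 := fun t => image_eq_zero_of_notMem_tsupport (by simp [hK0])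
    have h2 : ∀ t, deriv u t = 0 := by
      have : u = fun _ => (0 : ℂ) := funext h1
      rw [this]; intro t; simp
    simp [h1, h2]
  -- notation
  set K := tsupport u with hKdef
  have hKc : IsCompact K := hcomp
  have hu0 : ∀ t, t ∉ K → u t = 0 := fun t ht => image_eq_zero_of_notMem_tsupport ht
  have hu'0 : ∀ t, t ∉ K → deriv u t = 0 := by
    intro t ht
    have hmem : Kᶜ ∈ nhds t := (isClosed_tsupport u).isOpen_compl.mem_nhds ht
    have hev : u =ᶠ[nhds t] fun _ => (0 : ℂ) := by
      filter_upwards [hmem] with x hx using hu0 x hx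
    rw [hev.deriv_eq]; simp
  have hud : Differentiable ℝ u := hu.differentiable (by simp)
  have hu' : ∀ t, HasDerivAt u (deriv u t) t := fun t => (hud t).hasDerivAt
  have hu'c : Continuous (deriv u) := hu.continuous_deriv (by simp)
  -- the functions
  set E : ℝ → ℝ := fun t => Real.exp (2 * θ t) with hEdef
  set N : ℝ → ℝ := fun t => ‖u t‖ ^ 2 with hNdef
  set D2 : ℝ → ℝ := fun t => 2 * (deriv u t * (starRingEnd ℂ) (u t)).re with hD2def
  set g : ℝ → ℝ := fun t => 1 / (2 * t) - θ' t with hgdef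
  set F : ℝ → ℝ := fun t => g t * E t * N t with hFdef
  set Fd : ℝ → ℝ := fun t =>
    ((-(1 / (2 * t ^ 2)) - θ'' t) * E t + g t * (E t * (2 * θ' t))) * N t
      + g t * E t * D2 t with hFddef
  set P : ℝ → ℝ := fun t => (1 / t ^ 2 - κ / t) * ‖u t‖ ^ 2 * Real.exp (2 * θ t) with hPdef
  set Q : ℝ → ℝ := fun t => ‖deriv u t‖ ^ 2 * Real.exp (2 * θ t) with hQdef
  -- derivative of N
  have hNd : ∀ t, HasDerivAt N (D2 t) t := by
    intro t
    have h1 : HasDerivAt (fun s => (starRingEnd ℂ) (u s)) ((starRingEnd ℂ) (deriv u t)) t := by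
      simpa only [starRingEnd_apply] using (hu' t).star
    have h2 := (hu' t).mul h1
    have h3 := (Complex.reCLM.hasFDerivAt).comp_hasDerivAt t h2
    have h4 : HasDerivAt N
        (Complex.reCLM (deriv u t * (starRingEnd ℂ) (u t)
          + u t * (starRingEnd ℂ) (deriv u t))) t := by
      apply h3.congr_of_eventuallyEq
      apply Filter.Eventually.of_forall
      intro s
      simp only [hNdef, Function.comp_apply, Complex.reCLM_apply]
      rw [Pi.mul_apply, Complex.mul_conj]
      simp [Complex.sq_norm]
    convert h4 using 1
    simp only [hD2def, Complex.reCLM_apply, Complex.add_re, Complex.mul_re,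
      Complex.conj_re, Complex.conj_im]
    ring
  -- continuity facts on (0, ε)
  have hθc : ContinuousOn θ (Ioo 0 ε) :=
    fun t ht => ((hθ' t ht).continuousAt).continuousWithinAt
  have hθ'c : ContinuousOn θ' (Ioo 0 ε) :=
    fun t ht => ((hθ'' t ht).continuousAt).continuousWithinAt
  have hEc : ContinuousOn E (Ioo 0 ε) :=
    Real.continuous_exp.comp_continuousOn (continuousOn_const.mul hθc)
  have hNc : Continuous N := (hu.continuous.norm).pow 2
  have hD2c : Continuous D2 := by
    apply continuous_const.mul
    exact Complex.continuous_re.comp (hu'c.mul (Complex.continuous_conj.comp hu.continuous))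
  have hgc : ContinuousOn g (Ioo 0 ε) := by
    apply ContinuousOn.sub _ hθ'c
    apply continuousOn_const.div (continuous_const.mul continuous_id).continuousOn
    intro t ht
    have : (0:ℝ) < t := ht.1
    show (2:ℝ) * t ≠ 0
    positivity
  -- derivative of F on (0, ε)
  have hgd : ∀ t ∈ Ioo 0 ε, HasDerivAt g (-(1 / (2 * t ^ 2)) - θ'' t) t := by
    intro t ht
    have ht0 : t ≠ 0 := ne_of_gt ht.1
    have h1 : HasDerivAt (fun s : ℝ => 2 * s) 2 t := by
      simpa using (hasDerivAt_id t).const_mul (2:ℝ)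
    have h2 : (2:ℝ) * t ≠ 0 := by positivity
    have h3 := (h1.inv h2).sub (hθ'' t ht)
    have heq : ((fun s : ℝ => 2 * s)⁻¹ - θ') = g := by
      funext s; simp [hgdef, one_div]
    rw [heq] at h3
    exact h3.congr_deriv (by ring)
  have hEd : ∀ t ∈ Ioo 0 ε, HasDerivAt E (E t * (2 * θ' t)) t := by
    intro t ht
    exact ((hθ' t ht).const_mul 2).exp
  have hFd : ∀ t ∈ Ioo 0 ε, HasDerivAt F (Fd t) t := by
    intro t ht
    exact ((hgd t ht).mul (hEd t ht)).mul (hNd t)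
  -- Fd vanishes off K, and so do P, Q, F
  have hN0 : ∀ t, t ∉ K → N t = 0 := by
    intro t ht; simp [hNdef, hu0 t ht]
  have hD20 : ∀ t, t ∉ K → D2 t = 0 := by
    intro t ht; simp [hD2def, hu'0 t ht]
  have hF0 : ∀ t, t ∉ K → F t = 0 := by
    intro t ht; simp [hFdef, hN0 t ht]
  have hFd0 : ∀ t, t ∉ K → Fd t = 0 := by
    intro t ht; simp [hFddef, hN0 t ht, hD20 t ht]
  have hP0 : ∀ t, t ∉ K → P t = 0 := by
    intro t ht; simp [hPdef, hu0 t ht]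
  have hQ0 : ∀ t, t ∉ K → Q t = 0 := by
    intro t ht; simp [hQdef, hu'0 t ht]
  -- integrability helper
  have hint : ∀ f : ℝ → ℝ, ContinuousOn f (Ioo 0 ε) → (∀ t, t ∉ K → f t = 0) →
      IntegrableOn f (Ioo 0 ε) := by
    intro f hfc hf0
    have hKint : IntegrableOn f K := (hfc.mono hsupp).integrableOn_compact hKc
    have hdiff : IntegrableOn f (Ioo 0 ε \ K) := by
      refine (integrableOn_zero).congr_fun (fun x hx => (hf0 x hx.2).symm)
        (measurableSet_Ioo.diff (isClosed_tsupport u).measurableSet)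
    refine (hdiff.union hKint).mono_set ?_
    intro x hx
    by_cases h : x ∈ K
    · exact Or.inr h
    · exact Or.inl ⟨hx, h⟩
  have hPc : ContinuousOn P (Ioo 0 ε) := by
    apply ContinuousOn.mul (ContinuousOn.mul _ hNc.continuousOn) hEc
    apply ContinuousOn.sub
    · apply continuousOn_const.div (continuous_pow 2).continuousOn
      intro t ht; have : (0:ℝ) < t := ht.1; positivity
    · apply continuousOn_const.div continuous_id.continuousOn
      intro t ht; exact ne_of_gt ht.1
  have hQc : ContinuousOn Q (Ioo 0 ε) :=
    ContinuousOn.mul ((hu'c.norm.pow 2).continuousOn) hEc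
  have hFdc : ContinuousOn Fd (Ioo 0 ε) := by
    apply ContinuousOn.add
    · apply ContinuousOn.mul _ hNc.continuousOn
      apply ContinuousOn.add
      · apply ContinuousOn.mul _ hEc
        apply ContinuousOn.sub _ hθ''cont
        apply ContinuousOn.neg
        apply continuousOn_const.div
        · exact (continuous_const.mul (continuous_pow 2)).continuousOn
        · intro t ht; have : (0:ℝ) < t := ht.1; positivity
      · exact hgc.mul (hEc.mul (continuousOn_const.mul hθ'c))
    · exact (hgc.mul hEc).mul hD2c.continuousOn
  have hPint : IntegrableOn P (Ioo 0 ε) := hint P hPc hP0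
  have hQint : IntegrableOn Q (Ioo 0 ε) := hint Q hQc hQ0
  have hFdint : IntegrableOn Fd (Ioo 0 ε) := hint Fd hFdc hFd0
  -- pointwise inequality
  have hpt : ∀ t ∈ Ioo 0 ε, 0 ≤ Q t - Fd t - P t := by
    intro t ht
    have ht0 : (0:ℝ) < t := ht.1
    have hne : t ≠ 0 := ne_of_gt ht0
    have hnorm : ∀ z : ℂ, ‖z‖ ^ 2 = z.re ^ 2 + z.im ^ 2 := by
      intro z
      rw [Complex.sq_norm, Complex.normSq_apply]
      ring
    have hC : 1 / t ^ 2 - κ / t ≤ θ' t ^ 2 + θ'' t + 1 / (4 * t ^ 2) := by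
      have h1 := hVeff t ht
      have h2 : 3 / (4 * t ^ 2) + 1 / (4 * t ^ 2) = 1 / t ^ 2 := by
        field_simp; ring
      linarith
    have hid : Q t - Fd t - P t
        = ‖deriv u t - (g t : ℂ) * u t‖ ^ 2 * E t
          + (θ' t ^ 2 + θ'' t + 1 / (4 * t ^ 2) - (1 / t ^ 2 - κ / t)) * (N t * E t) := by
      simp only [hQdef, hPdef, hFddef, hNdef, hD2def, hgdef, hEdef]
      rw [hnorm, hnorm, hnorm]
      simp only [Complex.sub_re, Complex.sub_im, Complex.mul_re, Complex.mul_im,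
        Complex.ofReal_re, Complex.ofReal_im, Complex.conj_re, Complex.conj_im]
      field_simp
      ring
    rw [hid]
    have h1 : 0 ≤ ‖deriv u t - (g t : ℂ) * u t‖ ^ 2 * E t := by positivity
    have h2 : 0 ≤ (θ' t ^ 2 + θ'' t + 1 / (4 * t ^ 2) - (1 / t ^ 2 - κ / t)) * (N t * E t) := by
      apply mul_nonneg (by linarith)
      apply mul_nonneg (by positivity)
      exact (Real.exp_pos _).le
    linarith
  -- the integral of Fd vanishes
  have hKne := hKe
  obtain ⟨t0, ht0K⟩ := hKne
  set a := sInf K with hadef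
  set b := sSup K with hbdef
  have haK : a ∈ K := hKc.sInf_mem hKe
  have hbK : b ∈ K := hKc.sSup_mem hKe
  have haI : a ∈ Ioo 0 ε := hsupp haK
  have hbI : b ∈ Ioo 0 ε := hsupp hbK
  have hKsub : K ⊆ Icc a b := fun x hx =>
    ⟨csInf_le hKc.bddBelow hx, le_csSup hKc.bddAbove hx⟩
  set a' := a / 2 with ha'def
  set b' := (b + ε) / 2 with hb'def
  have ha'I : a' ∈ Ioo 0 ε := ⟨by simp only [ha'def]; linarith [haI.1], by
    simp only [ha'def]; linarith [haI.1, haI.2]⟩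
  have hb'I : b' ∈ Ioo 0 ε := ⟨by simp only [hb'def]; linarith [hbI.1], by
    simp only [hb'def]; linarith [hbI.2]⟩
  have hab : a ≤ b := le_trans (csInf_le hKc.bddBelow ht0K) (le_csSup hKc.bddAbove ht0K)
  have ha'b' : a' ≤ b' := by
    simp only [ha'def, hb'def]; linarith [haI.1, hbI.2, haI.2]
  have hIccsub : Icc a' b' ⊆ Ioo 0 ε := fun x hx => ⟨lt_of_lt_of_le ha'I.1 hx.1,
    lt_of_le_of_lt hx.2 hb'I.2⟩
  have hKsub' : ∀ x, x ∈ K → x ∈ Ioc a' b' := by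
    intro x hx
    obtain ⟨h1, h2⟩ := hKsub hx
    constructor
    · simp only [ha'def]; linarith [haI.1]
    · simp only [hb'def]; linarith [hbI.2]
  have ha'K : a' ∉ K := by
    intro h
    have := (hKsub h).1
    simp only [ha'def] at this
    linarith [haI.1]
  have hb'K : b' ∉ K := by
    intro h
    have := (hKsub h).2
    simp only [hb'def] at this
    linarith [hbI.2]
  have hFdzero : ∫ t in Ioo 0 ε, Fd t = 0 := by
    have e1 : ∫ t in Ioo 0 ε, Fd t = ∫ t, Fd t :=
      setIntegral_eq_integral_of_forall_compl_eq_zero (fun x hx =>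
        hFd0 x (fun h => hx (hsupp h)))
    have e2 : ∫ t in Ioc a' b', Fd t = ∫ t, Fd t :=
      setIntegral_eq_integral_of_forall_compl_eq_zero (fun x hx =>
        hFd0 x (fun h => hx (hKsub' x h)))
    have e3 : ∫ t in a'..b', Fd t = ∫ t in Ioc a' b', Fd t :=
      intervalIntegral.integral_of_le ha'b'
    have e4 : ∫ t in a'..b', Fd t = F b' - F a' := by
      apply intervalIntegral.integral_eq_sub_of_hasDerivAt
      · intro x hx
        rw [uIcc_of_le ha'b'] at hx
        exact hFd x (hIccsub hx)
      · apply ContinuousOn.intervalIntegrable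
        rw [uIcc_of_le ha'b']
        exact hFdc.mono hIccsub
    rw [e1, ← e2, ← e3, e4, hF0 a' ha'K, hF0 b' hb'K, sub_zero]
  -- conclude
  have h1 : 0 ≤ ∫ t in Ioo 0 ε, (Q t - Fd t - P t) :=
    setIntegral_nonneg measurableSet_Ioo hpt
  have h2 : ∫ t in Ioo 0 ε, (Q t - Fd t - P t)
      = (∫ t in Ioo 0 ε, Q t) - (∫ t in Ioo 0 ε, Fd t) - ∫ t in Ioo 0 ε, P t := by
    have hQF : IntegrableOn (fun t => Q t - Fd t) (Ioo 0 ε) := hQint.sub hFdint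
    rw [integral_sub hQF hPint, integral_sub hQint hFdint]
  rw [h2, hFdzero] at h1
  have : (∫ t in Ioo 0 ε, P t) ≤ ∫ t in Ioo 0 ε, Q t := by linarith
  exact this
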